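/- arXiv:2303.14902 — 2 statements merged into one kernel-verified Lean document; each statement's English description precedes it below -/
import Mathlib

section
/- Let (V, b) be a symplectic vector space of dimension 2ℓ (ℓ ≥ 1) over an algebraically closed field K of characteristic 2, and let u ∈ Sp(V) be unipotent with a single Jordan block of size 2ℓ on V (so u is a regular unipotent element of Sp(V)). Then the centralizer of u in the Lie algebra sp(V) has dimension ℓ + 1: dim {X ∈ sp(V) : uX = Xu} = ℓ + 1. -/
/-!
Put `N = u - 1`: it is nilpotent with a cyclic vector, so its centralizer in `End V` has
dimension at most `2ℓ`. In characteristic 2, `sp(V)` consists of the `b`-self-adjoint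
operators, and the adjoint of `N` is `N' = u⁻¹ - 1 = N + N² + ⋯`, again a polynomial in `N`.

The `ℓ + 1` operators `N'ⁱ Nⁱ` (`i < ℓ`) and `N^(2ℓ-1)` are self-adjoint and have the distinct
`N`-adic orders `0, 2, …, 2ℓ - 2, 2ℓ - 1`, so they are independent. Conversely, a combination
`∑ cₜ N^(2t+1)` (`t < ℓ - 1`) is self-adjoint only if `∑ cₜ (N'^(2t+1) - N^(2t+1)) = 0`; as
`N'^(2t+1) - N^(2t+1)` has order `2t + 2`, all `cₜ` vanish. So these `ℓ - 1` odd powers span a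
subspace of the centralizer meeting the self-adjoint operators trivially, and the dimension is at
most `2ℓ - (ℓ - 1)`.
-/

/-- The symplectic Lie algebra `sp(V)` of a bilinear form `b`:
all `X` with `b(Xv, w) + b(v, Xw) = 0`, as a submodule of `End(V)`. -/
def spSub (K V : Type*) [Field K] [AddCommGroup V] [Module K V]
    (b : V →ₗ[K] V →ₗ[K] K) : Submodule K (Module.End K V) where
  carrier := {X | ∀ v w : V, b (X v) w + b v (X w) = 0}
  add_mem' := by
    intro X Y hX hY v w
    have h1 := hX v w
    have h2 := hY v w
    simp only [LinearMap.add_apply, map_add] at *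
    linear_combination h1 + h2
  zero_mem' := by
    intro v w
    simp
  smul_mem' := by
    intro c X hX v w
    have h := hX v w
    simp only [LinearMap.smul_apply, map_smul, smul_eq_mul] at *
    linear_combination c * h

open Polynomial

namespace Polynomial

variable {R : Type*} [CommRing R]

/-- `p = X ^ k + O(X ^ (k + 1))`. -/
def HasInitialMonomial (p : R[X]) (k : ℕ) : Prop :=
  X ^ (k + 1) ∣ p - X ^ k

theorem hasInitialMonomial_X_pow (k : ℕ) : HasInitialMonomial (X ^ k : R[X]) k := by
  simp [HasInitialMonomial]

namespace HasInitialMonomial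

variable {p q : R[X]} {k j : ℕ}

theorem X_pow_dvd (hp : HasInitialMonomial p k) : X ^ k ∣ p := by
  have h := (pow_dvd_pow X k.le_succ).trans hp
  simpa using h.add (dvd_refl (X ^ k))

theorem mul (hp : HasInitialMonomial p k) (hq : HasInitialMonomial q j) :
    HasInitialMonomial (p * q) (k + j) := by
  have h : p * q - X ^ (k + j) = (p - X ^ k) * q + X ^ k * (q - X ^ j) := by ring
  rw [HasInitialMonomial, h]
  refine dvd_add ?_ ?_
  · simpa [← pow_add, Nat.add_right_comm] using mul_dvd_mul hp hq.X_pow_dvd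
  · simpa [← pow_add, Nat.add_assoc] using mul_dvd_mul_left (X ^ k) hq

theorem pow (hp : HasInitialMonomial p k) (m : ℕ) : HasInitialMonomial (p ^ m) (k * m) := by
  induction m with
  | zero => simpa using hasInitialMonomial_X_pow (R := R) 0
  | succ m ih => simpa [pow_succ, Nat.mul_succ] using ih.mul hp

theorem aeval_eq {A : Type*} [Ring A] [Algebra R A] {a : A} {n : ℕ} (ha : a ^ (n + 1) = 0)
    (hp : HasInitialMonomial p n) : aeval a p = a ^ n := by
  have h : aeval a (p - X ^ n) = 0 :=
    aeval_eq_zero_of_dvd_aeval_eq_zero hp (by simp [ha])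
  rwa [map_sub, map_pow, aeval_X, sub_eq_zero] at h

end HasInitialMonomial

section GeomSumX

variable {n : ℕ}

/-- `X + X ^ 2 + ⋯ + X ^ n`. In characteristic 2, `1 + geomSumX n` inverts `1 + X` modulo
`X ^ (n + 1)`, so `geomSumX n` evaluated at `u - 1` is `u⁻¹ - 1`. -/
noncomputable def geomSumX (n : ℕ) : R[X] :=
  ∑ i ∈ Finset.range n, X ^ (i + 1)

theorem one_add_X_mul_one_add_geomSumX [CharP R 2] (n : ℕ) :
    (1 + X) * (1 + geomSumX n : R[X]) = 1 + X ^ (n + 1) := by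
  have h : 1 + geomSumX n = ∑ i ∈ Finset.range (n + 1), (X : R[X]) ^ i := by
    rw [Finset.sum_range_succ', geomSumX, pow_zero, add_comm]
  rw [h, mul_comm, add_comm 1 X, ← CharTwo.sub_eq_add, geom_sum_mul, CharTwo.sub_eq_add, add_comm]

theorem X_pow_three_dvd_geomSumX_sub (hn : 2 ≤ n) :
    X ^ 3 ∣ (geomSumX n - X - X ^ 2 : R[X]) := by
  obtain ⟨m, rfl⟩ := Nat.exists_eq_add_of_le' hn
  rw [geomSumX, Finset.sum_range_succ', Finset.sum_range_succ']
  simp only [zero_add, pow_one, add_sub_cancel_right]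
  exact Finset.dvd_sum fun i _ => pow_dvd_pow X (by omega)

theorem hasInitialMonomial_geomSumX (hn : 1 ≤ n) : HasInitialMonomial (geomSumX n : R[X]) 1 := by
  obtain ⟨m, rfl⟩ := Nat.exists_eq_add_of_le' hn
  rw [HasInitialMonomial, geomSumX, Finset.sum_range_succ']
  simp only [zero_add, add_sub_cancel_right]
  exact Finset.dvd_sum fun i _ => pow_dvd_pow X (by omega)

theorem hasInitialMonomial_geomSumX_pow_sub_X_pow [CharP R 2] (hn : 2 ≤ n) (t : ℕ) :
    HasInitialMonomial (geomSumX n ^ (2 * t + 1) - X ^ (2 * t + 1) : R[X]) (2 * t + 2) := by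
  obtain ⟨s, hs⟩ := X_pow_three_dvd_geomSumX_sub (R := R) hn
  obtain ⟨w, hw⟩ : ∃ w : R[X], w = 1 + X + X ^ 2 * s := ⟨_, rfl⟩
  have hτ : geomSumX n = X * w := by linear_combination hs - X * hw
  -- Frobenius: `w ^ 2 = 1 + X ^ 2 + X ^ 4 * s ^ 2`.
  have hw2 : X ^ 2 ∣ w ^ 2 - 1 :=
    ⟨1 + X ^ 2 * s ^ 2, by
      linear_combination (X + X ^ 2 * s + X ^ 3 * s) * CharTwo.two_eq_zero (R := R[X]) +
        (w + 1 + X + X ^ 2 * s) * hw⟩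
  have hw2t : X ^ 2 ∣ (w ^ 2) ^ t - 1 :=
    hw2.trans (by simpa using sub_dvd_pow_sub_pow (w ^ 2) 1 t)
  have hw : HasInitialMonomial (w ^ (2 * t + 1) - 1) 1 := by
    have h : w ^ (2 * t + 1) - 1 - X ^ 1 = ((w ^ 2) ^ t - 1) * w + X ^ 2 * s := by
      linear_combination hw
    rw [HasInitialMonomial, h]
    exact dvd_add (dvd_mul_of_dvd_left hw2t w) (dvd_mul_right _ _)
  have h := (hasInitialMonomial_X_pow (2 * t + 1)).mul hw
  convert h using 1
  rw [hτ]
  ring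

end GeomSumX

end Polynomial

section Triangular

variable {K V W ι : Type*} [DivisionRing K] [AddCommGroup V] [Module K V] [AddCommGroup W]
  [Module K W] [Fintype ι] [LinearOrder ι]

theorem linearIndependent_of_triangular {v : ι → V} (f : ι → V →ₗ[K] W)
    (hdiag : ∀ i, f i (v i) ≠ 0) (hupper : ∀ i j, i < j → f i (v j) = 0) :
    LinearIndependent K v := by
  refine Fintype.linearIndependent_iff.mpr fun c hc i => ?_
  induction i using WellFoundedLT.induction with
  | _ i ih =>
    have h := congrArg (f i) hc
    rw [map_sum, map_zero, Finset.sum_eq_single i] at h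
    · exact (smul_eq_zero.mp (by simpa using h)).resolve_right (hdiag i)
    · intro j _ hji
      rcases hji.lt_or_gt with hj | hj
      · simp [ih j hj]
      · simp [hupper i j hj]
    · simp

end Triangular

theorem LinearMap.mem_ker_mulLeft_sub_mulRight {R A : Type*} [CommSemiring R] [Ring A]
    [Algebra R A] {a x : A} : x ∈ ker (mulLeft R a - mulRight R a) ↔ Commute a x := by
  rw [mem_ker, sub_apply, mulLeft_apply, mulRight_apply, sub_eq_zero]
  rfl

section Nilpotent

variable {K V : Type*} [Field K] [AddCommGroup V] [Module K V] {N : Module.End K V} {n : ℕ}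

theorem linearIndependent_aeval_apply {ι : Type*} [Fintype ι] [LinearOrder ι] {p : ι → K[X]}
    {k : ι → ℕ} (hN : N ^ (n + 1) = 0) {e : V} (he : (N ^ n) e ≠ 0)
    (hp : ∀ i, HasInitialMonomial (p i) (k i)) (hk : StrictMono k) (hkn : ∀ i, k i ≤ n) :
    LinearIndependent K fun i => aeval N (p i) e := by
  refine linearIndependent_of_triangular (fun i => N ^ (n - k i)) (fun i => ?_) fun i j hij => ?_
  · have h := (hasInitialMonomial_X_pow (n - k i)).mul (hp i)
    rw [Nat.sub_add_cancel (hkn i)] at h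
    have h' := h.aeval_eq hN
    rw [map_mul, map_pow, aeval_X] at h'
    rwa [← Module.End.mul_apply, h']
  · obtain ⟨q, hq⟩ := (hp j).X_pow_dvd
    have hvanish : N ^ (n - k i + k j) = 0 := pow_eq_zero_of_le (by have := hk hij; omega) hN
    rw [← Module.End.mul_apply, hq, map_mul, map_pow, aeval_X, ← mul_assoc, ← pow_add,
      hvanish, zero_mul, LinearMap.zero_apply]

theorem linearIndependent_aeval {ι : Type*} [Fintype ι] [LinearOrder ι] {p : ι → K[X]}
    {k : ι → ℕ} (hN : N ^ (n + 1) = 0) (hN' : N ^ n ≠ 0)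
    (hp : ∀ i, HasInitialMonomial (p i) (k i)) (hk : StrictMono k) (hkn : ∀ i, k i ≤ n) :
    LinearIndependent K fun i => aeval N (p i) := by
  obtain ⟨e, he⟩ : ∃ e, (N ^ n) e ≠ 0 := by
    by_contra! h
    exact hN' (LinearMap.ext h)
  exact .of_comp (LinearMap.applyₗ e) (linearIndependent_aeval_apply hN he hp hk hkn)

theorem finrank_ker_mulLeft_sub_mulRight_le [FiniteDimensional K V] (hN : N ^ (n + 1) = 0)
    (hN' : N ^ n ≠ 0) (hdim : Module.finrank K V = n + 1) :
    Module.finrank K (LinearMap.ker (LinearMap.mulLeft K N - LinearMap.mulRight K N)) ≤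
      n + 1 := by
  obtain ⟨e, he⟩ : ∃ e, (N ^ n) e ≠ 0 := by
    by_contra! h
    exact hN' (LinearMap.ext h)
  have hli : LinearIndependent K fun i : Fin (n + 1) => (N ^ (i : ℕ)) e := by
    simpa using linearIndependent_aeval_apply hN he (p := fun i : Fin (n + 1) => X ^ (i : ℕ))
      (fun i => hasInitialMonomial_X_pow _) Fin.val_strictMono (fun i => Nat.lt_succ_iff.mp i.2)
  have hspan := hli.span_eq_top_of_card_eq_finrank' (by simp [hdim])
  set C := LinearMap.ker (LinearMap.mulLeft K N - LinearMap.mulRight K N)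
  have hinj : Function.Injective ((LinearMap.applyₗ e).comp C.subtype) := by
    refine (injective_iff_map_eq_zero _).mpr fun ⟨Y, hY⟩ hYe => ?_
    have hcomm : Commute N Y := LinearMap.mem_ker_mulLeft_sub_mulRight.mp hY
    have hYe' : Y e = 0 := hYe
    -- An endomorphism commuting with `N` is determined by its value at the cyclic vector `e`.
    have hY0 : Y = 0 := LinearMap.ext_on_range hspan fun i => by
      rw [← Module.End.mul_apply, ← (hcomm.pow_left i).eq, Module.End.mul_apply, hYe', map_zero,
        LinearMap.zero_apply]
    simp [hY0]
  simpa [hdim] using LinearMap.finrank_le_finrank_of_injective hinj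

end Nilpotent

namespace LinearMap

variable {R M : Type*} [CommRing R] [AddCommGroup M] [Module R M] {B : LinearMap.BilinForm R M}
  {f g : Module.End R M}

theorem BilinForm.IsAlt.isSymm [CharP R 2] (hB : B.IsAlt) : B.IsSymm :=
  BilinForm.isSymm_def.mpr fun x y => by rw [← hB.neg_eq, CharTwo.neg_eq]

namespace IsAdjointPair

theorem symm (hB : B.IsSymm) (h : IsAdjointPair B B f g) : IsAdjointPair B B g f :=
  fun x y => by rw [hB.eq, ← h, hB.eq]

theorem pow (h : IsAdjointPair B B f g) (m : ℕ) : IsAdjointPair B B ⇑(f ^ m) ⇑(g ^ m) := by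
  induction m with
  | zero => exact isAdjointPair_one
  | succ m ih =>
    rw [pow_succ, pow_succ']
    exact ih.mul h

theorem aeval (h : IsAdjointPair B B f g) (p : R[X]) :
    IsAdjointPair B B ⇑(aeval f p) ⇑(aeval g p) := by
  induction p using Polynomial.induction_on' with
  | add p q hp hq =>
    rw [map_add, map_add]
    exact hp.add hq
  | monomial n a =>
    rw [aeval_monomial, aeval_monomial, ← Algebra.smul_def, ← Algebra.smul_def, coe_smul,
      coe_smul]
    exact (h.pow n).smul a

theorem eq_of_separatingLeft (hB : B.SeparatingLeft) {f' : Module.End R M}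
    (h : IsAdjointPair B B f g) (h' : IsAdjointPair B B f' g) : f = f' :=
  ext fun x => sub_eq_zero.mp <| hB _ fun y => by rw [map_sub, sub_apply, h x y, h' x y, sub_self]

end IsAdjointPair

theorem isAdjointPair_of_isOrthogonal (hf : B.IsOrthogonal f) (hfg : f * g = 1) :
    IsAdjointPair B B f g := fun x y => by
  conv_lhs => rw [← Module.End.one_apply (R := R) y, ← hfg, Module.End.mul_apply]
  exact hf x (g y)

end LinearMap

section SelfAdjointCentralizer

open LinearMap

variable {K V : Type*} [Field K] [AddCommGroup V] [Module K V]
  {b : LinearMap.BilinForm K V} {N : Module.End K V} {m : ℕ}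

theorem spSub_eq_selfAdjointSubmodule [CharP K 2] (b : LinearMap.BilinForm K V) :
    spSub K V b = b.selfAdjointSubmodule := by
  ext X
  exact forall₂_congr fun v w => CharTwo.add_eq_zero

theorem le_finrank_selfAdjointSubmodule_inf_ker [FiniteDimensional K V] (hB : b.IsSymm)
    (hN : N ^ (2 * m + 2) = 0) (hN' : N ^ (2 * m + 1) ≠ 0)
    (hadj : IsAdjointPair b b N (aeval N (geomSumX (2 * m + 1) : K[X]))) :
    m + 2 ≤ Module.finrank K ↥(b.selfAdjointSubmodule ⊓ ker (mulLeft K N - mulRight K N)) := by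
  set τ : K[X] := geomSumX (2 * m + 1)
  have hτ : HasInitialMonomial τ 1 := hasInitialMonomial_geomSumX (by omega)
  set S := b.selfAdjointSubmodule ⊓ ker (mulLeft K N - mulRight K N)
  let p : Fin (m + 2) → K[X] := fun i =>
    if (i : ℕ) ≤ m then τ ^ (i : ℕ) * X ^ (i : ℕ) else X ^ (2 * m + 1)
  let k : Fin (m + 2) → ℕ := fun i => if (i : ℕ) ≤ m then 2 * i else 2 * m + 1
  have hp : ∀ i, HasInitialMonomial (p i) (k i) := by
    intro i
    simp only [p, k]
    split_ifs
    · rw [show 2 * (i : ℕ) = 1 * i + i by ring]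
      exact (hτ.pow i).mul (hasInitialMonomial_X_pow i)
    · exact hasInitialMonomial_X_pow _
  have hk : StrictMono k := by
    intro i j hij
    have := Fin.lt_def.mp hij
    simp only [k]
    split_ifs <;> omega
  have hli := linearIndependent_aeval (n := 2 * m + 1) hN hN' hp hk fun i => by
    have := i.2
    simp only [k]
    split_ifs <;> omega
  have hmem : ∀ i, aeval N (p i) ∈ S := by
    refine fun i => ⟨?_, mem_ker_mulLeft_sub_mulRight.mpr ?_⟩
    · show IsAdjointPair b b (aeval N (p i)) (aeval N (p i))
      simp only [p]
      split_ifs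
      · rw [map_mul, map_pow, map_pow, aeval_X]
        exact ((hadj.symm hB).pow i).mul (hadj.pow i)
      · have hτpow : HasInitialMonomial (τ ^ (2 * m + 1)) (2 * m + 1) := by
          simpa only [one_mul] using hτ.pow (2 * m + 1)
        have h := hadj.pow (2 * m + 1)
        rwa [← map_pow, hτpow.aeval_eq hN, ← aeval_X_pow (R := K)] at h
    · simpa using (Commute.all X (p i)).map (aeval N)
  have hliS : LinearIndependent K fun i => (⟨aeval N (p i), hmem i⟩ : S) := .of_comp S.subtype hli
  simpa using hliS.fintype_card_le_finrank

theorem disjoint_selfAdjointSubmodule_span_odd_pow [CharP K 2] (hsep : b.SeparatingLeft)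
    (hB : b.IsSymm) (hN : N ^ (2 * m + 2) = 0) (hN' : N ^ (2 * m + 1) ≠ 0)
    (hadj : IsAdjointPair b b N (aeval N (geomSumX (2 * m + 1) : K[X]))) :
    Disjoint b.selfAdjointSubmodule
      (Submodule.span K (Set.range fun t : Fin m => N ^ (2 * (t : ℕ) + 1))) := by
  set τ : K[X] := geomSumX (2 * m + 1)
  rw [Submodule.disjoint_def]
  intro Y hYS hYT
  obtain ⟨c, rfl⟩ := (Submodule.mem_span_range_iff_exists_fun K).mp hYT
  set P : K[X] := ∑ t, c t • X ^ (2 * (t : ℕ) + 1)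
  have hP : aeval N P = ∑ t, c t • N ^ (2 * (t : ℕ) + 1) := by simp [P]
  -- With `N' = aeval N τ` the adjoint of `N`, both `Y` and `P(N')` are left adjoints of `Y`.
  have hadjP : aeval (aeval N τ) P = aeval N P :=
    ((hadj.symm hB).aeval P).eq_of_separatingLeft hsep (hP ▸ hYS)
  have hzero : ∑ t, c t • aeval N (τ ^ (2 * (t : ℕ) + 1) - X ^ (2 * (t : ℕ) + 1)) = 0 := by
    rw [← sub_eq_zero.mpr hadjP]
    simp [P, map_sum, smul_sub, Finset.sum_sub_distrib]
  have hli := linearIndependent_aeval (n := 2 * m + 1) hN hN'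
    (k := fun t : Fin m => 2 * (t : ℕ) + 2)
    (fun t => hasInitialMonomial_geomSumX_pow_sub_X_pow (n := 2 * m + 1) (by have := t.2; omega) t)
    (fun s t hst => by dsimp only; omega) (fun t => by have := t.2; omega)
  have hc := Fintype.linearIndependent_iff.mp hli c hzero
  simp [hc]

theorem finrank_selfAdjointSubmodule_inf_ker_le [CharP K 2] [FiniteDimensional K V]
    (hdim : Module.finrank K V = 2 * m + 2) (hsep : b.SeparatingLeft) (hB : b.IsSymm)
    (hN : N ^ (2 * m + 2) = 0) (hN' : N ^ (2 * m + 1) ≠ 0)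
    (hadj : IsAdjointPair b b N (aeval N (geomSumX (2 * m + 1) : K[X]))) :
    Module.finrank K ↥(b.selfAdjointSubmodule ⊓ ker (mulLeft K N - mulRight K N)) ≤ m + 2 := by
  set C := ker (mulLeft K N - mulRight K N)
  set T := Submodule.span K (Set.range fun t : Fin m => N ^ (2 * (t : ℕ) + 1))
  have hT : Module.finrank K T = m := by
    have hli := linearIndependent_aeval (n := 2 * m + 1) hN hN'
      (p := fun t : Fin m => X ^ (2 * (t : ℕ) + 1)) (fun t => hasInitialMonomial_X_pow _)
      (fun s t hst => by omega) (fun t => by have := t.2; omega)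
    simp only [map_pow, aeval_X] at hli
    simpa using finrank_span_eq_card hli
  have hTC : T ≤ C := Submodule.span_le.mpr <| Set.range_subset_iff.mpr fun t =>
    mem_ker_mulLeft_sub_mulRight.mpr (Commute.self_pow N _)
  have hdisj : Disjoint (b.selfAdjointSubmodule ⊓ C) T :=
    (disjoint_selfAdjointSubmodule_span_odd_pow hsep hB hN hN' hadj).mono_left inf_le_left
  have hsum := Submodule.finrank_sup_add_finrank_inf_eq (b.selfAdjointSubmodule ⊓ C) T
  rw [hdisj.eq_bot, finrank_bot] at hsum
  have hsup :=
    Submodule.finrank_mono (sup_le (inf_le_right : b.selfAdjointSubmodule ⊓ C ≤ C) hTC)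
  have hC : Module.finrank K C ≤ 2 * m + 2 :=
    finrank_ker_mulLeft_sub_mulRight_le (n := 2 * m + 1) hN hN' hdim
  omega

end SelfAdjointCentralizer

theorem stmt17_general (K : Type*) [Field K] [CharP K 2]
    (V : Type*) [AddCommGroup V] [Module K V] [FiniteDimensional K V]
    (ℓ : ℕ) (hl : 1 ≤ ℓ) (hdim : Module.finrank K V = 2 * ℓ)
    (b : V →ₗ[K] V →ₗ[K] K)
    (halt : ∀ v : V, b v v = 0)
    (hnd : ∀ v : V, (∀ w : V, b v w = 0) → v = 0)
    (u : Module.End K V)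
    (hSp : ∀ v w : V, b (u v) (u w) = b v w)
    (hu1 : (u - 1) ^ (2 * ℓ - 1) ≠ 0) (hu2 : (u - 1) ^ (2 * ℓ) = 0) :
    Module.finrank K
      ↥(spSub K V b ⊓
        LinearMap.ker (LinearMap.mulLeft K u - LinearMap.mulRight K u)) = ℓ + 1 := by
  obtain ⟨m, rfl⟩ : ∃ m, ℓ = m + 1 := ⟨ℓ - 1, by omega⟩
  set N := u - 1
  have hN : N ^ (2 * m + 2) = 0 := hu2
  have hN' : N ^ (2 * m + 1) ≠ 0 := by rwa [show 2 * (m + 1) - 1 = 2 * m + 1 by omega] at hu1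
  have hB := LinearMap.BilinForm.IsAlt.isSymm halt
  have hadj : LinearMap.IsAdjointPair b b N (aeval N (geomSumX (2 * m + 1) : K[X])) := by
    have hinv : u * (1 + aeval N (geomSumX (2 * m + 1) : K[X])) = 1 := by
      have h := congrArg (aeval N) (one_add_X_mul_one_add_geomSumX (R := K) (2 * m + 1))
      simpa [N, hN] using h
    have h : LinearMap.IsAdjointPair b b ⇑(u - 1) ⇑(1 + aeval N (geomSumX (2 * m + 1)) - 1) :=
      (LinearMap.isAdjointPair_of_isOrthogonal hSp hinv).sub LinearMap.isAdjointPair_one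
    rwa [add_sub_cancel_left] at h
  have hC : LinearMap.mulLeft K u - LinearMap.mulRight K u =
      LinearMap.mulLeft K N - LinearMap.mulRight K N := by
    ext X
    simp [N, sub_mul, mul_sub]
  rw [spSub_eq_selfAdjointSubmodule, hC]
  exact le_antisymm (finrank_selfAdjointSubmodule_inf_ker_le hdim hnd hB hN hN' hadj)
    (le_finrank_selfAdjointSubmodule_inf_ker hB hN hN' hadj)

/-- For a regular unipotent element `u ∈ Sp(V)` (a single Jordan block of size `2ℓ` on `V`),
the centralizer of `u` in the Lie algebra `sp(V)` has dimension `ℓ + 1`. -/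
theorem stmt17 (K : Type*) [Field K] [IsAlgClosed K] [CharP K 2]
    (V : Type*) [AddCommGroup V] [Module K V] [FiniteDimensional K V]
    (ℓ : ℕ) (hl : 1 ≤ ℓ) (hdim : Module.finrank K V = 2 * ℓ)
    (b : V →ₗ[K] V →ₗ[K] K)
    (halt : ∀ v : V, b v v = 0)
    (hnd : ∀ v : V, (∀ w : V, b v w = 0) → v = 0)
    (u : Module.End K V)
    (hSp : ∀ v w : V, b (u v) (u w) = b v w)
    (hu1 : (u - 1) ^ (2 * ℓ - 1) ≠ 0) (hu2 : (u - 1) ^ (2 * ℓ) = 0) :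
    Module.finrank K
      ↥(spSub K V b ⊓
        LinearMap.ker (LinearMap.mulLeft K u - LinearMap.mulRight K u)) = ℓ + 1 :=
  stmt17_general K V ℓ hl hdim b halt hnd u hSp hu1 hu2
end

section
/- Let (V, b) be a symplectic vector space of dimension 2ℓ (ℓ ≥ 1) over an algebraically closed field K of characteristic 2, and let e ∈ sp(V) be nilpotent with a single Jordan block of size 2ℓ on V, i.e. e^{2ℓ−1} ≠ 0 and e^{2ℓ} = 0 (so e is a regular nilpotent element of sp(V)). Then the centralizer of e in the Lie algebra sp(V) has dimension 2ℓ: dim {X ∈ sp(V) : eX = Xe} = 2ℓ. -/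
/-!
In characteristic 2 the defining condition `b (X v) w + b v (X w) = 0` of `sp(V)` says that `X`
is self-adjoint for `b`, and self-adjoint maps are closed under products; so every power of `e`
lies in `sp(V)`. A regular nilpotent `e` has a cyclic vector `v` (any `v` with
`e ^ (2ℓ - 1) v ≠ 0`), hence its centralizer in `End(V)` is spanned by the `2ℓ` independent
powers `1, e, …, e ^ (2ℓ - 1)`, and all of it already lies in `sp(V)`.
-/

open Submodule Set

theorem linearIndependent_pow_apply {K V : Type*} [DivisionRing K] [AddCommGroup V]
    [Module K V] {e : Module.End K V} {v : V} {n : ℕ}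
    (hv : (e ^ n) v ≠ 0) (hv' : (e ^ (n + 1)) v = 0) :
    LinearIndependent K fun i : Fin (n + 1) => (e ^ (i : ℕ)) v := by
  induction n generalizing v with
  | zero => exact (linearIndependent_unique_iff (ι := Fin 1)).mpr (by simpa using hv)
  | succ n ih =>
    have hshift (k : ℕ) : (e ^ k) (e v) = (e ^ (k + 1)) v := by
      rw [pow_succ, Module.End.mul_apply]
    have htail : Fin.tail (fun i : Fin (n + 2) => (e ^ (i : ℕ)) v)
        = fun i : Fin (n + 1) => (e ^ (i : ℕ)) (e v) := by
      ext i
      simp [Fin.tail, hshift]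
    rw [linearIndependent_finSucc, htail]
    refine ⟨ih (by rwa [hshift]) (by rwa [hshift]), ?_⟩
    have hker : span K (range fun i : Fin (n + 1) => (e ^ (i : ℕ)) (e v))
        ≤ LinearMap.ker (e ^ (n + 1)) := by
      rw [span_le]
      rintro _ ⟨i, rfl⟩
      rw [SetLike.mem_coe, LinearMap.mem_ker, ← Module.End.mul_apply, ← Module.End.mul_apply,
        mul_assoc, ← pow_succ, ← pow_add]
      exact Module.End.pow_map_zero_of_le (by omega) hv'
    exact fun hmem => hv (hker hmem)

theorem mem_ker_mulLeft_sub_mulRight_iff {R A : Type*} [CommRing R] [Ring A] [Algebra R A]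
    {a x : A} : x ∈ LinearMap.ker (LinearMap.mulLeft R a - LinearMap.mulRight R a) ↔
      Commute a x := by
  simp [sub_eq_zero, Commute, SemiconjBy]

theorem ker_mulLeft_sub_mulRight_eq_span_pow {R M : Type*} [CommRing R] [AddCommGroup M]
    [Module R M] {e : Module.End R M} {v : M} {n : ℕ}
    (hv : span R (range fun i : Fin n => (e ^ (i : ℕ)) v) = ⊤) :
    LinearMap.ker (LinearMap.mulLeft R e - LinearMap.mulRight R e) =
      span R (range fun i : Fin n => e ^ (i : ℕ)) := by
  apply le_antisymm
  · intro X hX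
    rw [mem_ker_mulLeft_sub_mulRight_iff] at hX
    obtain ⟨c, hc⟩ := (mem_span_range_iff_exists_fun R).mp (hv ▸ mem_top : X v ∈ _)
    have hX_eq : X = ∑ i, c i • e ^ (i : ℕ) := LinearMap.ext_on_range hv fun j => by
      rw [← Module.End.mul_apply, ← (hX.pow_left j).eq, Module.End.mul_apply, ← hc]
      simp [Finset.sum_mul, ← Module.End.mul_apply, ← pow_add, add_comm]
    rw [hX_eq]
    exact sum_mem fun i _ => smul_mem _ _ (subset_span ⟨i, rfl⟩)
  · rw [span_le]
    rintro _ ⟨i, rfl⟩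
    exact mem_ker_mulLeft_sub_mulRight_iff.mpr (Commute.self_pow e i)

theorem LinearMap.IsSelfAdjoint.pow {R M M₂ : Type*} [CommSemiring R] [AddCommMonoid M]
    [Module R M] [AddCommMonoid M₂] [Module R M₂] {B : M →ₗ[R] M →ₗ[R] M₂}
    {f : Module.End R M} (hf : B.IsSelfAdjoint f) (k : ℕ) : B.IsSelfAdjoint ⇑(f ^ k) := by
  induction k with
  | zero => exact isAdjointPair_one
  | succ k ih =>
    have := ih.mul hf
    rwa [← pow_succ, ← pow_succ'] at this

theorem mem_spSub_iff_isSelfAdjoint {K V : Type*} [Field K] [CharP K 2] [AddCommGroup V]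
    [Module K V] {b : V →ₗ[K] V →ₗ[K] K} {X : Module.End K V} :
    X ∈ spSub K V b ↔ b.IsSelfAdjoint X :=
  forall₂_congr fun _ _ => CharTwo.add_eq_zero

theorem stmt18_general (K : Type*) [Field K] [CharP K 2]
    (V : Type*) [AddCommGroup V] [Module K V] [FiniteDimensional K V]
    (ℓ : ℕ) (hl : 1 ≤ ℓ) (hdim : Module.finrank K V = 2 * ℓ)
    (b : V →ₗ[K] V →ₗ[K] K)
    (e : Module.End K V)
    (hsp : ∀ v w : V, b (e v) w + b v (e w) = 0)
    (he1 : e ^ (2 * ℓ - 1) ≠ 0) (he2 : e ^ (2 * ℓ) = 0) :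
    Module.finrank K
      ↥(spSub K V b ⊓
        LinearMap.ker (LinearMap.mulLeft K e - LinearMap.mulRight K e)) = 2 * ℓ := by
  obtain ⟨n, hn⟩ : ∃ n, 2 * ℓ = n + 1 := ⟨2 * ℓ - 1, by omega⟩
  rw [hn, Nat.add_sub_cancel] at he1
  rw [hn] at hdim he2 ⊢
  obtain ⟨v, hv⟩ : ∃ v, (e ^ n) v ≠ 0 := not_forall.mp fun h => he1 (LinearMap.ext h)
  have hli := linearIndependent_pow_apply hv (by rw [he2, LinearMap.zero_apply])
  have hcyc := hli.span_eq_top_of_card_eq_finrank' (by rw [Fintype.card_fin, hdim])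
  have he_sa : b.IsSelfAdjoint e := mem_spSub_iff_isSelfAdjoint.mp hsp
  have hpow_sp : span K (range fun i : Fin (n + 1) => e ^ (i : ℕ)) ≤ spSub K V b :=
    span_le.mpr <| by
      rintro _ ⟨i, rfl⟩
      exact mem_spSub_iff_isSelfAdjoint.mpr (he_sa.pow i)
  rw [ker_mulLeft_sub_mulRight_eq_span_pow hcyc, inf_eq_right.mpr hpow_sp,
    finrank_span_eq_card (hli.of_comp (LinearMap.applyₗ v)), Fintype.card_fin]

/-- For a regular nilpotent element `e ∈ sp(V)` (a single Jordan block of size `2ℓ` on `V`),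
the centralizer of `e` in the Lie algebra `sp(V)` has dimension `2ℓ`. -/
theorem stmt18 (K : Type*) [Field K] [IsAlgClosed K] [CharP K 2]
    (V : Type*) [AddCommGroup V] [Module K V] [FiniteDimensional K V]
    (ℓ : ℕ) (hl : 1 ≤ ℓ) (hdim : Module.finrank K V = 2 * ℓ)
    (b : V →ₗ[K] V →ₗ[K] K)
    (halt : ∀ v : V, b v v = 0)
    (hnd : ∀ v : V, (∀ w : V, b v w = 0) → v = 0)
    (e : Module.End K V)
    (hsp : ∀ v w : V, b (e v) w + b v (e w) = 0)
    (he1 : e ^ (2 * ℓ - 1) ≠ 0) (he2 : e ^ (2 * ℓ) = 0) :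
    Module.finrank K
      ↥(spSub K V b ⊓
        LinearMap.ker (LinearMap.mulLeft K e - LinearMap.mulRight K e)) = 2 * ℓ :=
  stmt18_general K V ℓ hl hdim b e hsp he1 he2
end
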